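/- Let h : ℝ → ℝ be the cubic polynomial h(x) = −x³/2 + 3x²/4 + 3x/4, and let h^{(k)} denote its k-fold iterate. Then lim_{m→∞} h^{(⌊1.01·m⌋)}(1/2 + (0.88)^m) = 1/2, whereas lim_{m→∞} h^{(⌊1.01·m⌋)}(1/2 + (0.89)^m) = 1. -/

import Mathlib

/-!
Writing `x = 1/2 + t`, `hCubic` becomes `hShift t = 9/8 t - t³/2`, which maps `[0, 1/2]`
into itself, is increasing there, and satisfies `t ≤ hShift t ≤ 9/8 t`, with
`hShift t ≥ 449/400 t` for `t ≤ 7/100`. After `k = ⌊1.01 m⌋` steps, `0.88^m` has grown to at most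
`(9/8)^k 0.88^m ≤ ((9/8)^1.01 · 0.88)^m → 0`. Since `(449/400)^1.01 · 0.89 > 1`, the orbit of
`0.89^m` instead passes `7/100` an unbounded number of steps before time `k`, and from `7/100`
the increasing orbit of `hShift` converges to the only positive fixed point `1/2`.
-/

open Finset Filter

namespace BooleanNoise

/-- The Boolean truth value of a proposition (classically). -/
noncomputable def bOf (P : Prop) : Bool := @decide P (Classical.propDecidable P)

section Basic

variable {Λ : Type*} [Fintype Λ] [DecidableEq Λ]

/-- Bernoulli(`p`) weight of a single bit. -/
def bern (p : ℝ) : Bool → ℝ := fun b => if b then p else 1 - p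

/-- Weight of a configuration under the product Bernoulli(`p`) measure. -/
def wt (p : ℝ) (ω : Λ → Bool) : ℝ := ∏ i, bern p (ω i)

/-- Probability of an event under the product Bernoulli(`p`) measure. -/
noncomputable def pr (p : ℝ) (A : Set (Λ → Bool)) : ℝ :=
  ∑ ω : Λ → Bool, A.indicator (wt p) ω

/-- Expectation of a real random variable under the product Bernoulli(`p`) measure. -/
noncomputable def ev (p : ℝ) (X : (Λ → Bool) → ℝ) : ℝ :=
  ∑ ω : Λ → Bool, wt p ω * X ω

/-- Joint single-coordinate weight of `(ω i, (ω^ε) i)`: the coordinate is kept with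
probability `1 - ε` and resampled as a fresh Bernoulli(`p`) bit with probability `ε`. -/
def cwt (p ε : ℝ) (x y : Bool) : ℝ :=
  bern p x * ((if y = x then 1 - ε else 0) + ε * bern p y)

/-- Joint weight of the pair `(ω, ω^ε)`. -/
def jwt (p ε : ℝ) (q : (Λ → Bool) × (Λ → Bool)) : ℝ :=
  ∏ i, cwt p ε (q.1 i) (q.2 i)

/-- Probability of an event for the pair `(ω, ω^ε)`. -/
noncomputable def jpr (p ε : ℝ) (A : Set ((Λ → Bool) × (Λ → Bool))) : ℝ :=
  ∑ q : (Λ → Bool) × (Λ → Bool), A.indicator (jwt p ε) q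

/-- Covariance of `f ω` and `f (ω^ε)`. -/
noncomputable def cov (p ε : ℝ) (f : (Λ → Bool) → Bool) : ℝ :=
  jpr p ε {q | f q.1 = true ∧ f q.2 = true}
    - jpr p ε {q | f q.1 = true} * jpr p ε {q | f q.2 = true}

/-- `P(f ω ≠ f (ω^ε))`. -/
noncomputable def disagree (p ε : ℝ) (f : (Λ → Bool) → Bool) : ℝ :=
  jpr p ε {q | f q.1 ≠ f q.2}

/-- `f` is monotone increasing (with respect to the coordinatewise order `false < true`). -/
def MonotoneBool (f : (Λ → Bool) → Bool) : Prop :=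
  ∀ ⦃ω ω' : Λ → Bool⦄, ω ≤ ω' → f ω ≤ f ω'

/-- `W` forces `f = 1`: any configuration that is all ones on `W` has `f`-value `true`. -/
def ForcesOne (f : (Λ → Bool) → Bool) (W : Finset Λ) : Prop :=
  ∀ ω : Λ → Bool, (∀ i ∈ W, ω i = true) → f ω = true

/-- `W` is a 1-witness for `f`: a minimal set forcing `f = 1`. -/
def IsOneWitness (f : (Λ → Bool) → Bool) (W : Finset Λ) : Prop :=
  ForcesOne f W ∧ ∀ W' ⊆ W, ForcesOne f W' → W' = W

/-- `W` forces `f = 0`: any configuration that is all zeros on `W` has `f`-value `false`. -/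
def ForcesZero (f : (Λ → Bool) → Bool) (W : Finset Λ) : Prop :=
  ∀ ω : Λ → Bool, (∀ i ∈ W, ω i = false) → f ω = false

/-- `W` is a 0-witness for `f`: a minimal set forcing `f = 0`. -/
def IsZeroWitness (f : (Λ → Bool) → Bool) (W : Finset Λ) : Prop :=
  ForcesZero f W ∧ ∀ W' ⊆ W, ForcesZero f W' → W' = W

/-- `P(f(ω^ε) = 1 ∣ ω ≡ 1 on W)`. -/
noncomputable def prNoisyOneGivenOnes (p ε : ℝ) (f : (Λ → Bool) → Bool) (W : Finset Λ) : ℝ :=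
  jpr p ε {q | f q.2 = true ∧ ∀ i ∈ W, q.1 i = true}
    / jpr p ε {q | ∀ i ∈ W, q.1 i = true}

/-- `P(f(ω^ε) = 0 ∣ ω ≡ 0 on W)`. -/
noncomputable def prNoisyZeroGivenZeros (p ε : ℝ) (f : (Λ → Bool) → Bool) (W : Finset Λ) : ℝ :=
  jpr p ε {q | f q.2 = false ∧ ∀ i ∈ W, q.1 i = false}
    / jpr p ε {q | ∀ i ∈ W, q.1 i = false}

/-- `P(f(ω^ε) = 1 ∣ f(ω) = 1)`. -/
noncomputable def prNoisyOneGivenOne (p ε : ℝ) (f : (Λ → Bool) → Bool) : ℝ :=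
  jpr p ε {q | f q.2 = true ∧ f q.1 = true} / jpr p ε {q | f q.1 = true}

/-- `max_{W ∈ W₁(f)} [P(f(ω^ε)=1 ∣ ω ≡ 1 on W) − P(f=1)]`. -/
noncomputable def oneSNSgap (p ε : ℝ) (f : (Λ → Bool) → Bool) : ℝ :=
  ⨆ W : {W : Finset Λ // IsOneWitness f W},
    (prNoisyOneGivenOnes p ε f W.1 - pr p {ω | f ω = true})

/-- `max_{W ∈ W₀(f)} [P(f(ω^ε)=0 ∣ ω ≡ 0 on W) − P(f=0)]`. -/
noncomputable def zeroSNSgap (p ε : ℝ) (f : (Λ → Bool) → Bool) : ℝ :=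
  ⨆ W : {W : Finset Λ // IsZeroWitness f W},
    (prNoisyZeroGivenZeros p ε f W.1 - pr p {ω | f ω = false})

end Basic

/-- A sequence of Boolean functions is non-degenerate if `P(fₙ = 1)` stays bounded
away from `0` and from `1`. -/
def Nondeg {Λ : ℕ → Type*} [∀ n, Fintype (Λ n)] [∀ n, DecidableEq (Λ n)]
    (p : ℕ → ℝ) (f : ∀ n, (Λ n → Bool) → Bool) : Prop :=
  ∃ c : ℝ, 0 < c ∧ ∀ᶠ n : ℕ in atTop,
    c ≤ pr (p n) {ω | f n ω = true} ∧ pr (p n) {ω | f n ω = true} ≤ 1 - c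

section Graphs

/-- The index set of the `n.choose 2` potential edges of a graph on `Fin n`. -/
abbrev EdgeIdx (n : ℕ) := {e : Fin n × Fin n // e.1 < e.2}

/-- The graph on `Fin n` determined by an edge configuration. -/
def graphOf {n : ℕ} (ω : EdgeIdx n → Bool) : SimpleGraph (Fin n) where
  Adj i j := ∃ e : EdgeIdx n, ω e = true ∧
    ((e.1.1 = i ∧ e.1.2 = j) ∨ (e.1.1 = j ∧ e.1.2 = i))
  symm := by
    constructor
    rintro i j ⟨e, he, h⟩
    exact ⟨e, he, h.symm⟩
  loopless := by
    constructor
    rintro i ⟨e, he, (⟨h1, h2⟩ | ⟨h1, h2⟩)⟩ <;>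
      · have := e.2
        rw [h1, h2] at this
        exact lt_irrefl i this

/-- `G` contains a cycle of length `ℓ`. -/
def hasCycleOfLength {V : Type*} (G : SimpleGraph V) (ℓ : ℕ) : Prop :=
  ∃ (v : V) (c : G.Walk v v), c.IsCycle ∧ c.length = ℓ

/-- The minimum degree of `G` is at least `k`. -/
def minDegreeAtLeast {V : Type*} (G : SimpleGraph V) (k : ℕ) : Prop :=
  ∀ v : V, k ≤ (G.neighborSet v).ncard

/-- `G` contains a copy of `H`. -/
def containsCopy {V W : Type*} (G : SimpleGraph V) (H : SimpleGraph W) : Prop :=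
  ∃ φ : H →g G, Function.Injective φ

/-- The number of copies of `H` in `G` (subgraphs of `G` isomorphic to `H`). -/
noncomputable def copyCount {V W : Type*} (G : SimpleGraph V) (H : SimpleGraph W) : ℕ :=
  Nat.card {G' : G.Subgraph // Nonempty (G'.coe ≃g H)}

/-- A graph is strictly balanced if every proper subgraph with at least one vertex has a
strictly smaller average degree, i.e. edge/vertex ratio. -/
def StrictlyBalanced {V : Type*} [Fintype V] (H : SimpleGraph V) : Prop :=
  ∀ H' : H.Subgraph, H' ≠ ⊤ → H'.verts.Nonempty →
    (H'.edgeSet.ncard : ℝ) / (H'.verts.ncard : ℝ)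
      < (H.edgeSet.ncard : ℝ) / (Fintype.card V : ℝ)

end Graphs

end BooleanNoise

namespace BooleanNoise

/-- The cubic polynomial `h(x) = −x³/2 + 3x²/4 + 3x/4` arising from recursive 5-majority. -/
noncomputable def hCubic (x : ℝ) : ℝ := -x ^ 3 / 2 + 3 * x ^ 2 / 4 + 3 * x / 4


open Set Function Topology

section Iterate

variable {α : Type*} [Field α] [LinearOrder α] [IsStrictOrderedRing α]
  {f : α → α} {s : Set α}

theorem iterate_le_pow_mul_of_mapsTo (hs : MapsTo f s s) {c : α} (hc : 0 ≤ c)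
    (hf : ∀ y ∈ s, f y ≤ c * y) {x : α} (hx : x ∈ s) (n : ℕ) : f^[n] x ≤ c ^ n * x := by
  induction n with
  | zero => simp
  | succ n ih =>
    rw [iterate_succ_apply', pow_succ', mul_assoc]
    exact (hf _ (hs.iterate n hx)).trans (mul_le_mul_of_nonneg_left ih hc)

theorem min_pow_mul_le_iterate_of_mapsTo (hs : MapsTo f s s) (hf : ∀ y ∈ s, y ≤ f y)
    {a c : α} (ha : 0 ≤ a) (hc : 1 ≤ c) (hfa : ∀ y ∈ s, y < a → c * y ≤ f y)
    {x : α} (hx : x ∈ s) (n : ℕ) : min (c ^ n * x) a ≤ f^[n] x := by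
  induction n with
  | zero => simp
  | succ n ih =>
    have hn := hs.iterate n hx
    rw [iterate_succ_apply']
    rcases le_or_gt a (f^[n] x) with hle | hlt
    · exact (min_le_right _ _).trans (hle.trans (hf _ hn))
    · calc min (c ^ (n + 1) * x) a ≤ min (c ^ (n + 1) * x) (c * a) :=
            min_le_min le_rfl (le_mul_of_one_le_left ha hc)
        _ = c * min (c ^ n * x) a := by
            rw [mul_min_of_nonneg _ _ (zero_le_one.trans hc), pow_succ', mul_assoc]
        _ ≤ c * f^[n] x := mul_le_mul_of_nonneg_left ih (zero_le_one.trans hc)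
        _ ≤ f (f^[n] x) := hfa _ hn hlt

end Iterate

theorem monotoneOn_iterate_of_mapsTo {α : Type*} [Preorder α] {f : α → α} {s : Set α}
    (hf : MonotoneOn f s) (hs : MapsTo f s s) (n : ℕ) :
    MonotoneOn f^[n] s := by
  induction n with
  | zero => exact monotone_id.monotoneOn s
  | succ n ih =>
    intro x hx y hy hxy
    rw [iterate_succ_apply', iterate_succ_apply']
    exact hf (hs.iterate n hx) (hs.iterate n hy) (ih hx hy hxy)

section FloorExponent

variable {c r l : ℝ}

theorem pow_floor_mul_le_rpow_pow (hc : 1 ≤ c) (hl : 0 ≤ l) (m : ℕ) :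
    c ^ ⌊l * m⌋₊ ≤ (c ^ l) ^ m := by
  rw [← Real.rpow_natCast, ← Real.rpow_natCast, ← Real.rpow_mul (by linarith)]
  exact Real.rpow_le_rpow_of_exponent_le hc (Nat.floor_le (by positivity))

theorem rpow_pow_le_pow_floor_mul (hc : 1 ≤ c) (m : ℕ) :
    (c ^ l) ^ m ≤ c * c ^ ⌊l * m⌋₊ := by
  rw [← pow_succ', ← Real.rpow_natCast, ← Real.rpow_natCast, ← Real.rpow_mul (by linarith)]
  exact Real.rpow_le_rpow_of_exponent_le hc (by push_cast; exact (Nat.lt_floor_add_one _).le)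

theorem tendsto_pow_floor_mul_mul_pow_nhds_zero (hc : 1 ≤ c) (hl : 0 ≤ l) (hr : 0 ≤ r)
    (h : c ^ l * r < 1) :
    Tendsto (fun m : ℕ => c ^ ⌊l * m⌋₊ * r ^ m) atTop (𝓝 0) := by
  refine squeeze_zero (fun m => by positivity) (fun m => ?_)
    (tendsto_pow_atTop_nhds_zero_of_lt_one (by positivity) h)
  rw [mul_pow]
  exact mul_le_mul_of_nonneg_right (pow_floor_mul_le_rpow_pow hc hl m) (by positivity)

theorem tendsto_pow_floor_mul_mul_pow_atTop (hc : 1 ≤ c) (hr : 0 ≤ r) (h : 1 < c ^ l * r) :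
    Tendsto (fun m : ℕ => c ^ ⌊l * m⌋₊ * r ^ m) atTop atTop := by
  refine tendsto_atTop_mono (fun m => ?_)
    ((tendsto_pow_atTop_atTop_of_one_lt h).atTop_div_const (by linarith : (0 : ℝ) < c))
  rw [div_le_iff₀ (by linarith), mul_pow, mul_right_comm, mul_comm _ c]
  exact mul_le_mul_of_nonneg_right (rpow_pow_le_pow_floor_mul hc m) (by positivity)

end FloorExponent

noncomputable def hShift (t : ℝ) : ℝ := 9 / 8 * t - t ^ 3 / 2

theorem semiconj_hShift_hCubic : Semiconj (1 / 2 + ·) hShift hCubic := fun t => by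
  simp only [hShift, hCubic]; ring

theorem hCubic_iterate_half_add (n : ℕ) (t : ℝ) :
    hCubic^[n] (1 / 2 + t) = 1 / 2 + hShift^[n] t :=
  ((semiconj_hShift_hCubic.iterate_right n) t).symm

theorem continuous_hShift : Continuous hShift := by
  unfold hShift; fun_prop

theorem mapsTo_hShift : MapsTo hShift (Icc 0 (1 / 2)) (Icc 0 (1 / 2)) := by
  rintro t ⟨h0, h1⟩
  constructor <;> simp only [hShift] <;>
    nlinarith [mul_nonneg h0 h0, mul_nonneg h0 (sub_nonneg.2 h1)]

theorem self_le_hShift {t : ℝ} (ht : t ∈ Icc (0 : ℝ) (1 / 2)) : t ≤ hShift t := by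
  obtain ⟨h0, h1⟩ := ht
  simp only [hShift]; nlinarith [mul_nonneg (mul_nonneg h0 h0) (sub_nonneg.2 h1)]

theorem hShift_le {t : ℝ} (ht : 0 ≤ t) : hShift t ≤ 9 / 8 * t := by
  simp only [hShift]; nlinarith [pow_nonneg ht 3]

theorem le_hShift {t : ℝ} (h0 : 0 ≤ t) (h1 : t ≤ 7 / 100) : 449 / 400 * t ≤ hShift t := by
  simp only [hShift]; nlinarith [mul_nonneg (mul_nonneg h0 h0) (sub_nonneg.2 h1)]

theorem monotoneOn_hShift : MonotoneOn hShift (Icc 0 (1 / 2)) := by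
  rintro x ⟨hx0, hx1⟩ y ⟨hy0, hy1⟩ hxy
  have hfactor : 0 ≤ 9 / 8 - (x ^ 2 + x * y + y ^ 2) / 2 := by nlinarith
  have hdiff : hShift y - hShift x = (y - x) * (9 / 8 - (x ^ 2 + x * y + y ^ 2) / 2) := by
    simp only [hShift]; ring
  linarith [mul_nonneg (sub_nonneg.2 hxy) hfactor]

theorem eq_half_of_isFixedPt_hShift {t : ℝ} (ht : IsFixedPt hShift t) (h0 : 0 < t) :
    t = 1 / 2 := by
  have : t * (1 / 4 - t ^ 2) = 0 := by unfold IsFixedPt hShift at ht; linarith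
  have : (t - 1 / 2) * (t + 1 / 2) = 0 := by nlinarith [(mul_eq_zero.1 this).resolve_left h0.ne']
  nlinarith [(mul_eq_zero.1 this)]

theorem tendsto_hShift_iterate_half {a : ℝ} (ha : a ∈ Ioc (0 : ℝ) (1 / 2)) :
    Tendsto (fun n => hShift^[n] a) atTop (𝓝 (1 / 2)) := by
  have hmem n : hShift^[n] a ∈ Icc (0 : ℝ) (1 / 2) :=
    mapsTo_hShift.iterate n (Ioc_subset_Icc_self ha)
  have hmono : Monotone fun n => hShift^[n] a := monotone_nat_of_le_succ fun n => by
    rw [iterate_succ_apply']; exact self_le_hShift (hmem n)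
  have hbdd : BddAbove (range fun n => hShift^[n] a) :=
    ⟨1 / 2, by rintro _ ⟨n, rfl⟩; exact (hmem n).2⟩
  have hlim := tendsto_atTop_ciSup hmono hbdd
  have hfix := isFixedPt_of_tendsto_iterate hlim continuous_hShift.continuousAt
  rwa [eq_half_of_isFixedPt_hShift hfix (ha.1.trans_le (le_ciSup hbdd 0))] at hlim

theorem tendsto_hShift_iterate_zero {ι : Type*} {l : Filter ι} {k : ι → ℕ} {t : ι → ℝ}
    (ht : ∀ᶠ i in l, t i ∈ Icc (0 : ℝ) (1 / 2))
    (h : Tendsto (fun i => (9 / 8 : ℝ) ^ k i * t i) l (𝓝 0)) :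
    Tendsto (fun i => hShift^[k i] (t i)) l (𝓝 0) :=
  squeeze_zero' (ht.mono fun i hi => (mapsTo_hShift.iterate _ hi).1)
    (ht.mono fun i hi => iterate_le_pow_mul_of_mapsTo mapsTo_hShift (by norm_num)
      (fun _ hy => hShift_le hy.1) hi _) h

theorem tendsto_hShift_iterate_half_of_tendsto_atTop {ι : Type*} {l : Filter ι} {k : ι → ℕ}
    {t : ι → ℝ} (ht : ∀ᶠ i in l, t i ∈ Icc (0 : ℝ) (1 / 2)) (hk : Tendsto k l atTop)
    (h : Tendsto (fun i => (449 / 400 : ℝ) ^ k i * t i) l atTop) :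
    Tendsto (fun i => hShift^[k i] (t i)) l (𝓝 (1 / 2)) := by
  refine tendsto_order.2 ⟨fun b hb => ?_,
    fun b hb => ht.mono fun i hi => (mapsTo_hShift.iterate _ hi).2.trans_lt hb⟩
  obtain ⟨J, hJ⟩ := ((tendsto_hShift_iterate_half
    (show (7 / 100 : ℝ) ∈ Set.Ioc 0 (1 / 2) by norm_num)).eventually_const_lt hb).exists
  filter_upwards [ht, hk.eventually_ge_atTop J,
    h.eventually_ge_atTop (7 / 100 * (449 / 400) ^ J)] with i hti hkJ hbig
  have hsplit : (449 / 400 : ℝ) ^ k i = (449 / 400) ^ (k i - J) * (449 / 400) ^ J := by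
    rw [← pow_add, Nat.sub_add_cancel hkJ]
  have hescape : 7 / 100 ≤ hShift^[k i - J] (t i) := by
    refine le_trans (le_min ?_ le_rfl) (min_pow_mul_le_iterate_of_mapsTo mapsTo_hShift
      (fun _ hy => self_le_hShift hy) (by norm_num) (by norm_num)
      (fun _ hy hya => le_hShift hy.1 hya.le) hti _)
    rw [hsplit, mul_right_comm] at hbig
    exact le_of_mul_le_mul_right hbig (by positivity)
  calc b < hShift^[J] (7 / 100) := hJ
    _ ≤ hShift^[J] (hShift^[k i - J] (t i)) :=
      monotoneOn_iterate_of_mapsTo monotoneOn_hShift mapsTo_hShift J (by norm_num)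
        (mapsTo_hShift.iterate _ hti) hescape
    _ = hShift^[k i] (t i) := by rw [← iterate_add_apply, Nat.add_sub_cancel' hkJ]

theorem eventually_pow_mem_Icc {r : ℝ} (h0 : 0 ≤ r) (h1 : r < 1) :
    ∀ᶠ m : ℕ in atTop, r ^ m ∈ Icc (0 : ℝ) (1 / 2) :=
  ((tendsto_pow_atTop_nhds_zero_of_lt_one h0 h1).eventually_le_const (by norm_num)).mono
    fun m hm => ⟨pow_nonneg h0 m, hm⟩

theorem rpow_div_mul_pow {c : ℝ} (hc : 0 ≤ c) (r : ℝ) (p : ℕ) {q : ℕ} (hq : q ≠ 0) :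
    (c ^ ((p : ℝ) / q) * r) ^ q = c ^ p * r ^ q := by
  rw [mul_pow, ← Real.rpow_natCast (c ^ _), ← Real.rpow_mul hc,
    div_mul_cancel₀ _ (Nat.cast_ne_zero.2 hq), Real.rpow_natCast]

theorem upper_growth_rate_lt_one : (9 / 8 : ℝ) ^ (1.01 : ℝ) * 0.88 < 1 := by
  rw [show (1.01 : ℝ) = (101 : ℕ) / (100 : ℕ) by norm_num,
    ← pow_lt_one_iff_of_nonneg (by positivity) (by norm_num : 100 ≠ 0),
    rpow_div_mul_pow (by norm_num) _ _ (by norm_num)]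
  norm_num

theorem one_lt_lower_growth_rate : 1 < (449 / 400 : ℝ) ^ (1.01 : ℝ) * 0.89 := by
  rw [show (1.01 : ℝ) = (101 : ℕ) / (100 : ℕ) by norm_num,
    ← one_lt_pow_iff_of_nonneg (by positivity) (by norm_num : 100 ≠ 0),
    rpow_div_mul_pow (by norm_num) _ _ (by norm_num)]
  norm_num

/-- For the iterates of `h(x) = −x³/2 + 3x²/4 + 3x/4`:
`h^(⌊1.01·m⌋)(1/2 + 0.88^m) → 1/2`, whereas `h^(⌊1.01·m⌋)(1/2 + 0.89^m) → 1`. -/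
theorem stmt19 :
    Tendsto (fun m : ℕ => hCubic^[⌊(1.01 : ℝ) * m⌋₊] (1/2 + (0.88 : ℝ) ^ m))
      atTop (nhds (1/2)) ∧
    Tendsto (fun m : ℕ => hCubic^[⌊(1.01 : ℝ) * m⌋₊] (1/2 + (0.89 : ℝ) ^ m))
      atTop (nhds 1) := by
  simp only [hCubic_iterate_half_add]
  constructor
  · simpa only [add_zero] using (tendsto_hShift_iterate_zero
      (eventually_pow_mem_Icc (by norm_num) (by norm_num))
      (tendsto_pow_floor_mul_mul_pow_nhds_zero (by norm_num) (by norm_num) (by norm_num)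
        upper_growth_rate_lt_one)).const_add (1 / 2)
  · have hfloor : Tendsto (fun m : ℕ => ⌊(1.01 : ℝ) * m⌋₊) atTop atTop :=
      tendsto_nat_floor_atTop.comp (tendsto_natCast_atTop_atTop.const_mul_atTop (by norm_num))
    convert (tendsto_hShift_iterate_half_of_tendsto_atTop
      (eventually_pow_mem_Icc (by norm_num) (by norm_num)) hfloor
      (tendsto_pow_floor_mul_mul_pow_atTop (by norm_num) (by norm_num)
        one_lt_lower_growth_rate)).const_add (1 / 2) using 2
    norm_num

end BooleanNoise
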